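/- Let W be an n × n real symmetric positive definite matrix, let z ∈ ℝⁿ, let c > 0, and set V = W + c z zᵀ, ρ = zᵀ W⁻¹ z, φ = zᵀ W⁻² z, and ψ = zᵀ W⁻³ z. Then trace(V⁻²) = trace(W⁻²) − 2cψ / (1 + cρ) + c²φ² / (1 + cρ)². If moreover W − I_n is positive semidefinite, then |trace(V⁻²) − trace(W⁻²)| < 3. -/

import Mathlib

/-!
Sherman–Morrison gives `V⁻¹ = W⁻¹ - k • y yᵀ` with `y = W⁻¹ z` and `k = c / (1 + cρ)`; squaring
and taking traces, the cross terms contribute `yᵀ W⁻¹ y = ψ` and the rank-one square `(yᵀ y)² = φ²`.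
If `W ≥ 1` in the Loewner order then `W⁻¹ - W⁻² = W⁻¹ (W - 1) W⁻¹ ≥ 0`, hence
`1 - W⁻¹ = (1 - W⁻¹)² + (W⁻¹ - W⁻²) ≥ 0` and `W⁻² - W⁻³ = W⁻¹ (1 - W⁻¹) W⁻¹ ≥ 0`,
so `0 ≤ ψ ≤ φ ≤ ρ`; the two correction terms are then below `2` and `1` respectively.
-/

open Matrix

namespace Matrix

variable {ι : Type*} [Fintype ι]

theorem trace_sub_smul_vecMulVec_mul_self {R : Type*} [CommRing R] (A : Matrix ι ι R) (k : R)
    (x y : ι → R) :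
    trace ((A - k • vecMulVec x y) * (A - k • vecMulVec x y)) =
      trace (A * A) - 2 * k * (y ⬝ᵥ A *ᵥ x) + k ^ 2 * (y ⬝ᵥ x) ^ 2 := by
  simp only [Matrix.sub_mul, Matrix.mul_sub, Matrix.smul_mul, Matrix.mul_smul,
    vecMulVec_mul_vecMulVec]
  simp only [mul_vecMulVec, vecMulVec_mul, trace_sub, trace_smul, trace_vecMulVec,
    smul_dotProduct, smul_eq_mul, dotProduct_comm x, ← dotProduct_mulVec, dotProduct_comm (A *ᵥ x)]
  ring

theorem dotProduct_mulVec_le_of_posSemidef_sub {M N : Matrix ι ι ℝ} (h : (M - N).PosSemidef)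
    (x : ι → ℝ) : x ⬝ᵥ N *ᵥ x ≤ x ⬝ᵥ M *ᵥ x := by
  have := h.dotProduct_mulVec_nonneg x
  rw [star_trivial, sub_mulVec, dotProduct_sub] at this
  linarith

variable [DecidableEq ι]

section Field

variable {K : Type*} [Field K] {W : Matrix ι ι K} {c : K} {u v : ι → K}

theorem inv_add_smul_vecMulVec (hW : IsUnit W) (h : 1 + c * (v ⬝ᵥ W⁻¹ *ᵥ u) ≠ 0) :
    (W + c • vecMulVec u v)⁻¹ =
      W⁻¹ - (c / (1 + c * (v ⬝ᵥ W⁻¹ *ᵥ u))) • vecMulVec (W⁻¹ *ᵥ u) (v ᵥ* W⁻¹) := by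
  have hWW : W * W⁻¹ = 1 := mul_nonsing_inv W ((isUnit_iff_isUnit_det W).mp hW)
  apply inv_eq_right_inv
  simp only [Matrix.add_mul, Matrix.mul_sub, Matrix.mul_smul, Matrix.smul_mul,
    vecMulVec_mul_vecMulVec]
  simp only [mul_vecMulVec, vecMulVec_mul, mulVec_mulVec, hWW, one_mulVec, vecMulVec_smul,
    smul_smul]
  rw [add_sub_assoc, add_eq_left]
  match_scalars
  field_simp
  ring

theorem trace_inv_add_smul_vecMulVec_mul_self (hW : IsUnit W)
    (h : 1 + c * (v ⬝ᵥ W⁻¹ *ᵥ u) ≠ 0) :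
    trace ((W + c • vecMulVec u v)⁻¹ * (W + c • vecMulVec u v)⁻¹) =
      trace (W⁻¹ * W⁻¹) - 2 * c * (v ⬝ᵥ (W⁻¹ * W⁻¹ * W⁻¹) *ᵥ u) / (1 + c * (v ⬝ᵥ W⁻¹ *ᵥ u))
        + c ^ 2 * (v ⬝ᵥ (W⁻¹ * W⁻¹) *ᵥ u) ^ 2 / (1 + c * (v ⬝ᵥ W⁻¹ *ᵥ u)) ^ 2 := by
  rw [inv_add_smul_vecMulVec hW h, trace_sub_smul_vecMulVec_mul_self]
  simp only [← dotProduct_mulVec, mulVec_mulVec, Matrix.mul_assoc]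
  field_simp

end Field

variable {W : Matrix ι ι ℝ}

theorem PosDef.posSemidef_inv_sub_inv_mul_inv (hW : W.PosDef) (hW1 : (W - 1).PosSemidef) :
    (W⁻¹ - W⁻¹ * W⁻¹).PosSemidef := by
  have hWW : W⁻¹ * W = 1 := nonsing_inv_mul W ((isUnit_iff_isUnit_det W).mp hW.isUnit)
  have := hW1.conjTranspose_mul_mul_same W⁻¹
  rwa [hW.isHermitian.inv.eq, Matrix.mul_sub, hWW, Matrix.mul_one, Matrix.sub_mul,
    Matrix.one_mul] at this

theorem PosDef.posSemidef_inv_mul_inv_sub (hW : W.PosDef) (hW1 : (W - 1).PosSemidef) :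
    (W⁻¹ * W⁻¹ - W⁻¹ * W⁻¹ * W⁻¹).PosSemidef := by
  set A := W⁻¹
  have hA : Aᴴ = A := hW.isHermitian.inv.eq
  have hOneSub : (1 - A).PosSemidef := by
    have := (posSemidef_conjTranspose_mul_self (1 - A)).add
      (hW.posSemidef_inv_sub_inv_mul_inv hW1)
    rwa [conjTranspose_sub, conjTranspose_one, hA,
      show (1 - A) * (1 - A) + (A - A * A) = 1 - A by noncomm_ring] at this
  have := hOneSub.conjTranspose_mul_mul_same A
  rwa [hA, show A * (1 - A) * A = A * A - A * A * A by noncomm_ring] at this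

end Matrix

theorem abs_sq_div_sub_two_mul_div_lt_three {c ρ φ ψ : ℝ} (hc : 0 ≤ c) (hψ : 0 ≤ ψ)
    (hψφ : ψ ≤ φ) (hφρ : φ ≤ ρ) :
    |c ^ 2 * φ ^ 2 / (1 + c * ρ) ^ 2 - 2 * c * ψ / (1 + c * ρ)| < 3 := by
  have hd : 0 < 1 + c * ρ := by nlinarith
  have hsq : c ^ 2 * φ ^ 2 / (1 + c * ρ) ^ 2 < 1 := by
    rw [← mul_pow, ← div_pow]
    refine pow_lt_one₀ (div_nonneg (mul_nonneg hc (hψ.trans hψφ)) hd.le)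
      ((div_lt_one hd).2 (by nlinarith)) two_ne_zero
  have hlin : 2 * c * ψ / (1 + c * ρ) < 2 := by
    rw [div_lt_iff₀ hd]
    nlinarith
  calc |c ^ 2 * φ ^ 2 / (1 + c * ρ) ^ 2 - 2 * c * ψ / (1 + c * ρ)|
      ≤ |c ^ 2 * φ ^ 2 / (1 + c * ρ) ^ 2| + |2 * c * ψ / (1 + c * ρ)| := abs_sub _ _
    _ < 1 + 2 := by
      rw [abs_of_nonneg (by positivity), abs_of_nonneg (div_nonneg (by positivity) hd.le)]
      linarith
    _ = 3 := by norm_num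

/-- Leave-one-out identity for the trace of the squared inverse: for `W` real symmetric
positive definite, `c > 0`, `V = W + c z zᵀ`, `ρ = zᵀ W⁻¹ z`, `φ = zᵀ W⁻² z` and
`ψ = zᵀ W⁻³ z`,
`trace(V⁻²) = trace(W⁻²) − 2cψ/(1 + cρ) + c²φ²/(1 + cρ)²`; moreover, if `W − Iₙ` is
positive semidefinite, then `|trace(V⁻²) − trace(W⁻²)| < 3`. -/
theorem leave_one_out_trace_sq_identity
    {n : ℕ} (W : Matrix (Fin n) (Fin n) ℝ) (hW : W.PosDef)
    (z : Fin n → ℝ) (c : ℝ) (hc : 0 < c) :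
    (Matrix.trace ((W + c • vecMulVec z z)⁻¹ * (W + c • vecMulVec z z)⁻¹)
        = Matrix.trace (W⁻¹ * W⁻¹)
          - 2 * c * (z ⬝ᵥ ((W⁻¹ * W⁻¹ * W⁻¹) *ᵥ z)) / (1 + c * (z ⬝ᵥ (W⁻¹ *ᵥ z)))
          + c ^ 2 * (z ⬝ᵥ ((W⁻¹ * W⁻¹) *ᵥ z)) ^ 2 /
              (1 + c * (z ⬝ᵥ (W⁻¹ *ᵥ z))) ^ 2) ∧
    ((W - 1).PosSemidef →
      |Matrix.trace ((W + c • vecMulVec z z)⁻¹ * (W + c • vecMulVec z z)⁻¹)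
          - Matrix.trace (W⁻¹ * W⁻¹)| < 3) := by
  have hρ : 0 ≤ z ⬝ᵥ W⁻¹ *ᵥ z := by
    simpa only [star_trivial] using hW.inv.posSemidef.dotProduct_mulVec_nonneg z
  have hid := trace_inv_add_smul_vecMulVec_mul_self hW.isUnit
    (by positivity : 1 + c * (z ⬝ᵥ W⁻¹ *ᵥ z) ≠ 0)
  refine ⟨hid, fun hW1 => ?_⟩
  have hψ : 0 ≤ z ⬝ᵥ (W⁻¹ * W⁻¹ * W⁻¹) *ᵥ z := by
    have := (hW.inv.posSemidef.conjTranspose_mul_mul_same W⁻¹).dotProduct_mulVec_nonneg z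
    rwa [hW.isHermitian.inv.eq, star_trivial] at this
  rw [hid, add_sub_right_comm, sub_sub_cancel_left, neg_add_eq_sub]
  exact abs_sq_div_sub_two_mul_div_lt_three hc.le hψ
    (dotProduct_mulVec_le_of_posSemidef_sub (hW.posSemidef_inv_mul_inv_sub hW1) z)
    (dotProduct_mulVec_le_of_posSemidef_sub (hW.posSemidef_inv_sub_inv_mul_inv hW1) z)
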